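/- arXiv:2312.11391 — 5 statements merged into one kernel-verified Lean document; each statement's English description precedes it below -/
import Mathlib

section
/- Suppose there exist vertices k and m such that i reaches k under u, c k m holds (k competes with m), and m reaches j under u (i.e., the set S⁻_{i,j} of the paper is nonempty). Then Assumption 1 fails for the augmented relation u': there exist vertices x and y with c x y such that y strictly reaches x under u'. Concretely, m strictly reaches its competitor k under u'. -/
namespace Relation

variable {α : Type*} {r : α → α → Prop}

theorem TransGen.of_reflTransGen_edge_reflTransGen {x a b y : α}
    (hxa : ReflTransGen r x a) (hab : r a b) (hby : ReflTransGen r b y) : TransGen r x y :=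
  (TransGen.tail' hxa hab).trans_left hby

theorem transGen_add_edge_of_reflTransGen {j i x y : α}
    (hxj : ReflTransGen r x j) (hiy : ReflTransGen r i y) :
    TransGen (fun a b => r a b ∨ (a = j ∧ b = i)) x y :=
  have lift := ReflTransGen.mono (p := fun a b => r a b ∨ (a = j ∧ b = i)) fun _ _ => Or.inl
  .of_reflTransGen_edge_reflTransGen (lift _ _ hxj) (Or.inr ⟨rfl, rfl⟩) (lift _ _ hiy)

end Relation

/-- If `S⁻_{i,j} ≠ ∅`, i.e. there are `k`, `m` with `i` reaching `k` under
`u`, `c k m`, and `m` reaching `j` under `u`, then adding the edge `(j, i)`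
violates Assumption 1: some FL-PT strictly reaches its competitor under the
augmented relation — concretely, `m` strictly reaches its competitor `k`. -/
theorem nonempty_Sminus_violates_assumption1 {V : Type*}
    (u c : V → V → Prop) (j i k m : V)
    (hik : Relation.ReflTransGen u i k)
    (hkm : c k m)
    (hmj : Relation.ReflTransGen u m j) :
    (∃ x y : V, c x y ∧
        Relation.TransGen (fun a b => u a b ∨ (a = j ∧ b = i)) y x) ∧
      Relation.TransGen (fun a b => u a b ∨ (a = j ∧ b = i)) m k := by
  have hmk := Relation.transGen_add_edge_of_reflTransGen hmj hik
  exact ⟨⟨k, m, hkm, hmk⟩, hmk⟩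
end

section
/- Suppose there exist vertices k and m such that k reaches j under u, c m k holds (m competes with k), and i reaches m under u (i.e., the set S⁺_{i,j} of the paper is nonempty). Then Assumption 1 fails for the augmented relation u': there exist vertices x and y with c x y such that y strictly reaches x under u'. Concretely, k strictly reaches m under u' while c m k holds. -/
theorem Relation.transGen_of_reflTransGen_of_rel_of_reflTransGen {α : Type*}
    {r p : α → α → Prop} {a b c d : α} (hrp : r ≤ p)
    (hab : Relation.ReflTransGen r a b) (hbc : p b c) (hcd : Relation.ReflTransGen r c d) :
    Relation.TransGen p a d :=
  (Relation.TransGen.tail' (Relation.ReflTransGen.mono hrp _ _ hab) hbc).trans_left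
    (Relation.ReflTransGen.mono hrp _ _ hcd)

/-- If `S⁺_{i,j} ≠ ∅`, i.e. there are `k`, `m` with `k` reaching `j` under
`u`, `c m k`, and `i` reaching `m` under `u`, then adding the edge `(j, i)`
violates Assumption 1: some FL-PT strictly reaches its competitor under the
augmented relation — concretely, `k` strictly reaches `m` while `c m k`. -/
theorem nonempty_Splus_violates_assumption1 {V : Type*}
    (u c : V → V → Prop) (j i k m : V)
    (hkj : Relation.ReflTransGen u k j)
    (hmk : c m k)
    (him : Relation.ReflTransGen u i m) :
    (∃ x y : V, c x y ∧
        Relation.TransGen (fun a b => u a b ∨ (a = j ∧ b = i)) y x) ∧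
      Relation.TransGen (fun a b => u a b ∨ (a = j ∧ b = i)) k m := by
  have hkm : Relation.TransGen (fun a b => u a b ∨ (a = j ∧ b = i)) k m :=
    Relation.transGen_of_reflTransGen_of_rel_of_reflTransGen (fun _ _ => Or.inl) hkj
      (Or.inr ⟨rfl, rfl⟩) him
  exact ⟨⟨m, k, hmk, hkm⟩, hkm⟩
end

section
/- Suppose the no-conflict invariant holds for u: for all vertices p and q with c p q, q does not strictly reach p under u. Suppose further there do NOT exist vertices k and m such that i reaches k under u, c k m holds, and m reaches j under u (the emptiness check of line 3 of Algorithm 2). Then the no-conflict invariant also holds for the augmented relation u': for all vertices p and q with c p q, q does not strictly reach p under u'. -/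
lemma transgen_aug {V : Type*} (u : V → V → Prop) (j i : V) {a b : V}
    (h : Relation.TransGen (fun x y => u x y ∨ (x = j ∧ y = i)) a b) :
    Relation.TransGen u a b ∨
      (Relation.ReflTransGen u a j ∧ Relation.ReflTransGen u i b) := by
  induction h with
  | single h =>
    rcases h with h | ⟨rfl, rfl⟩
    · exact Or.inl (Relation.TransGen.single h)
    · exact Or.inr ⟨Relation.ReflTransGen.refl, Relation.ReflTransGen.refl⟩
  | tail _ h ih =>
    rcases h with h | ⟨rfl, rfl⟩
    · rcases ih with ih | ⟨h1, h2⟩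
      · exact Or.inl (ih.tail h)
      · exact Or.inr ⟨h1, h2.tail h⟩
    · rcases ih with ih | ⟨h1, _⟩
      · exact Or.inr ⟨ih.to_reflTransGen, Relation.ReflTransGen.refl⟩
      · exact Or.inr ⟨h1, Relation.ReflTransGen.refl⟩

/-- Correctness step of Proposition 2: if the no-conflict invariant holds
for `u` and the emptiness check of line 3 of Algorithm 2 passes, then the
no-conflict invariant also holds after adding the edge `(j, i)`. -/
theorem edge_addition_preserves_no_conflict {V : Type*}
    (u c : V → V → Prop) (j i : V)
    (hsymm : ∀ x y : V, c x y → c y x)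
    (hinv : ∀ p q : V, c p q → ¬ Relation.TransGen u q p)
    (hempty : ¬ ∃ k m : V, Relation.ReflTransGen u i k ∧ c k m ∧
        Relation.ReflTransGen u m j) :
    ∀ p q : V, c p q →
      ¬ Relation.TransGen (fun x y => u x y ∨ (x = j ∧ y = i)) q p := by
  intro p q hc h
  rcases transgen_aug u j i h with h | ⟨h1, h2⟩
  · exact hinv p q hc h
  · exact hempty ⟨p, q, h2, hsymm q p (hsymm p q hc), h1⟩
end

section
/- Suppose the no-conflict invariant holds for u: for all vertices p and q with c p q, q does not strictly reach p under u. Then the no-conflict invariant holds for the augmented relation u' (for all p, q with c p q, q does not strictly reach p under u') if and only if there do not exist vertices k and m such that i reaches k under u, c k m holds, and m reaches j under u. -/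
namespace Relation

variable {α : Type*} {r : α → α → Prop} {a b x y : α}

/-- A path that uses the new edge `(a, b)` is cut at its last use of it. -/
theorem transGen_sup_edge_iff :
    TransGen (fun x y => r x y ∨ (x = a ∧ y = b)) x y ↔
      TransGen r x y ∨ (ReflTransGen r x a ∧ ReflTransGen r b y) := by
  constructor
  · intro h
    induction h with
    | single hxy =>
      rcases hxy with hxy | ⟨rfl, rfl⟩
      · exact .inl (.single hxy)
      · exact .inr ⟨.refl, .refl⟩
    | tail _ hyz ih =>
      rcases hyz with hyz | ⟨rfl, rfl⟩
      · exact ih.imp (·.tail hyz) (fun ⟨hxa, hby⟩ => ⟨hxa, hby.tail hyz⟩)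
      · exact .inr ⟨ih.elim TransGen.to_reflTransGen And.left, .refl⟩
  · have hle : r ≤ fun p q => r p q ∨ (p = a ∧ q = b) := fun _ _ => .inl
    rintro (h | ⟨hxa, hby⟩)
    · exact TransGen.mono hle _ _ h
    · exact TransGen.trans_right (ReflTransGen.mono hle _ _ hxa) <|
        .head' (.inr ⟨rfl, rfl⟩) (ReflTransGen.mono hle _ _ hby)

end Relation

theorem edge_addition_no_conflict_iff_general {V : Type*}
    (u c : V → V → Prop) (j i : V)
    (hinv : ∀ p q : V, c p q → ¬ Relation.TransGen u q p) :
    (∀ p q : V, c p q →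
        ¬ Relation.TransGen (fun x y => u x y ∨ (x = j ∧ y = i)) q p) ↔
      ¬ ∃ k m : V, Relation.ReflTransGen u i k ∧ c k m ∧
          Relation.ReflTransGen u m j := by
  simp_rw [Relation.transGen_sup_edge_iff]
  constructor
  · rintro hnew ⟨k, m, hik, hkm, hmj⟩
    exact hnew k m hkm (.inr ⟨hmj, hik⟩)
  · rintro hempty p q hpq (hqp | ⟨hqj, hip⟩)
    · exact hinv p q hpq hqp
    · exact hempty ⟨p, q, hip, hpq, hqj⟩

/-- Necessity and sufficiency of the emptiness check of line 3 of
Algorithm 2: given the no-conflict invariant for `u`, the invariant holds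
for the relation augmented with the edge `(j, i)` iff there are no `k`, `m`
with `i` reaching `k` under `u`, `c k m`, and `m` reaching `j` under `u`. -/
theorem edge_addition_no_conflict_iff {V : Type*}
    (u c : V → V → Prop) (j i : V)
    (hsymm : ∀ x y : V, c x y → c y x)
    (hinv : ∀ p q : V, c p q → ¬ Relation.TransGen u q p) :
    (∀ p q : V, c p q →
        ¬ Relation.TransGen (fun x y => u x y ∨ (x = j ∧ y = i)) q p) ↔
      ¬ ∃ k m : V, Relation.ReflTransGen u i k ∧ c k m ∧
          Relation.ReflTransGen u m j :=
  edge_addition_no_conflict_iff_general u c j i hinv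
end

section
/- Let L = [(j_1, i_1), …, (j_m, i_m)] be a finite list of directed edges, and define relations u_0 = u and, for 1 ≤ t ≤ m, u_t x y ↔ u_{t-1} x y ∨ (x = j_t ∧ y = i_t). Suppose the no-conflict invariant holds for u_0 (for all p, q with c p q, q does not strictly reach p under u_0), and suppose that for each t with 1 ≤ t ≤ m there do not exist vertices k and m' such that i_t reaches k under u_{t-1}, c k m' holds, and m' reaches j_t under u_{t-1}. Then the no-conflict invariant holds for the final relation u_m: for all p, q with c p q, q does not strictly reach p under u_m. -/
/-- Adding a single directed edge `e = (e.1, e.2)` to the relation `u`. -/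
def augmentRel {V : Type*} (u : V → V → Prop) (e : V × V) : V → V → Prop :=
  fun x y => u x y ∨ (x = e.1 ∧ y = e.2)

/-- The relation obtained from `u` by sequentially adding the edges of a
list `L`. -/
def augmentRelList {V : Type*} (u : V → V → Prop) (L : List (V × V)) :
    V → V → Prop :=
  L.foldl augmentRel u

private lemma augment_rtg {V : Type*} {u : V → V → Prop} {e : V × V} {x y : V}
    (h : Relation.ReflTransGen (augmentRel u e) x y) :
    Relation.ReflTransGen u x y ∨
      (Relation.ReflTransGen u x e.1 ∧ Relation.ReflTransGen u e.2 y) := by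
  induction h with
  | refl => exact Or.inl .refl
  | tail _ hs ih =>
    rcases hs with hs | ⟨rfl, rfl⟩
    · rcases ih with h | ⟨h1, h2⟩
      · exact Or.inl (h.tail hs)
      · exact Or.inr ⟨h1, h2.tail hs⟩
    · rcases ih with h | ⟨h1, _⟩
      · exact Or.inr ⟨h, .refl⟩
      · exact Or.inr ⟨h1, .refl⟩

private lemma augment_tg {V : Type*} {u : V → V → Prop} {e : V × V} {x y : V}
    (h : Relation.TransGen (augmentRel u e) x y) :
    Relation.TransGen u x y ∨
      (Relation.ReflTransGen u x e.1 ∧ Relation.ReflTransGen u e.2 y) := by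
  rcases (Relation.TransGen.head'_iff).1 h with ⟨z, hs, hr⟩
  rcases hs with hs | ⟨rfl, rfl⟩
  · rcases augment_rtg hr with h' | ⟨h1, h2⟩
    · exact Or.inl (Relation.TransGen.head' hs h')
    · exact Or.inr ⟨Relation.ReflTransGen.head hs h1, h2⟩
  · rcases augment_rtg hr with h' | ⟨_, h2⟩
    · exact Or.inr ⟨.refl, h'⟩
    · exact Or.inr ⟨.refl, h2⟩

private lemma single_step {V : Type*} {u c : V → V → Prop} {e : V × V}
    (hinv : ∀ p q : V, c p q → ¬ Relation.TransGen u q p)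
    (hcheck : ¬ ∃ k m' : V, Relation.ReflTransGen u e.2 k ∧ c k m' ∧
        Relation.ReflTransGen u m' e.1) :
    ∀ p q : V, c p q → ¬ Relation.TransGen (augmentRel u e) q p := by
  intro p q hc h
  rcases augment_tg h with h' | ⟨h1, h2⟩
  · exact hinv p q hc h'
  · exact hcheck ⟨p, q, h2, hc, h1⟩

/-- Inductive correctness of Algorithms 1 and 2: starting from a data usage
relation `u` satisfying the no-conflict invariant, sequentially adding a
list `L` of edges, each of which passes the emptiness check of line 3 of
Algorithm 2 with respect to the relation built so far, yields a final
relation still satisfying the no-conflict invariant. -/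
theorem sequential_edge_addition_preserves_no_conflict {V : Type*}
    (u c : V → V → Prop)
    (hsymm : ∀ x y : V, c x y → c y x)
    (L : List (V × V))
    (hinv : ∀ p q : V, c p q → ¬ Relation.TransGen u q p)
    (hcheck : ∀ t : Fin L.length,
      ¬ ∃ k m' : V,
          Relation.ReflTransGen (augmentRelList u (L.take t)) (L.get t).2 k ∧
          c k m' ∧
          Relation.ReflTransGen (augmentRelList u (L.take t)) m' (L.get t).1) :
    ∀ p q : V, c p q → ¬ Relation.TransGen (augmentRelList u L) q p := by
  induction L generalizing u with
  | nil => exact hinv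
  | cons e L ih =>
    have h0 := hcheck ⟨0, by simp⟩
    simp only [List.take, augmentRelList, List.foldl, List.get] at h0 ⊢
    exact ih (augmentRel u e)
      (single_step hinv h0)
      (fun t => by
        have := hcheck t.succ
        simpa [augmentRelList, List.take_succ_cons] using this)
end
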